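/- arXiv:1808.02754 — 6 statements merged into one kernel-verified Lean document; each statement's English description precedes it below -/
import Mathlib

section
/- Let Q = Σ_{i=1}^{m} c_{2i-1} c_{2i}† c_{2i+1} act on the exterior algebra generated by c_1†,…,c_{2m+1}†, where c_i is the odd derivation (annihilation operator) dual to c_i† and c_i† denotes left multiplication. Then Q² = 0. -/
/-- The fermionic Fock space on `n` sites: the exterior algebra `Λ[c₁†,…,c_n†]`,
realized as functions on occupation configurations. -/
abbrev FockSpace (n : ℕ) := (Fin n → Bool) → ℚ

/-- The Jordan–Wigner sign `(-1)^{#{j < i : s j occupied}}`. -/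
noncomputable def jwSign {n : ℕ} (s : Fin n → Bool) (i : Fin n) : ℚ :=
  (-1 : ℚ) ^ (Finset.univ.filter (fun j : Fin n => j < i ∧ s j = true)).card

/-- The creation operator `c_i†` (left multiplication by `c_i†`). -/
noncomputable def cr {n : ℕ} (i : Fin n) : FockSpace n →ₗ[ℚ] FockSpace n where
  toFun f s := if s i = true then jwSign s i * f (Function.update s i false) else 0
  map_add' f g := by
    funext s; by_cases h : s i = true <;> simp [h, mul_add]
  map_smul' a f := by
    funext s; by_cases h : s i = true <;> simp [h] <;> ring

/-- The annihilation operator `c_i` (the odd derivation dual to `c_i†`),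
satisfying `{c_i, c_j†} = δ_{ij}`. -/
noncomputable def an {n : ℕ} (i : Fin n) : FockSpace n →ₗ[ℚ] FockSpace n where
  toFun f s := if s i = false then jwSign s i * f (Function.update s i true) else 0
  map_add' f g := by
    funext s; by_cases h : s i = false <;> simp [h, mul_add]
  map_smul' a f := by
    funext s; by_cases h : s i = false <;> simp [h] <;> ring

/-- The supercharge of the Nicolai model, `Q = Σ_{i=1}^{m} c_{2i-1} c_{2i}† c_{2i+1}`
(operator products composed right-to-left; sites are 0-indexed here, so the
1-indexed triple `(2i-1, 2i, 2i+1)` becomes `(2i, 2i+1, 2i+2)` for `i = 0,…,m-1`). -/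
noncomputable def nicolaiQ (m : ℕ) : FockSpace (2*m+1) →ₗ[ℚ] FockSpace (2*m+1) :=
  ∑ i : Fin m,
    an (⟨2*i.1, by have := i.isLt; omega⟩ : Fin (2*m+1)) ∘ₗ
    cr (⟨2*i.1+1, by have := i.isLt; omega⟩ : Fin (2*m+1)) ∘ₗ
    an (⟨2*i.1+2, by have := i.isLt; omega⟩ : Fin (2*m+1))

/- ## Sign lemmas -/

lemma jwSign_update_of_not_lt {n : ℕ} {s : Fin n → Bool} {k i : Fin n} (h : ¬ k < i) (b : Bool) :
    jwSign (Function.update s k b) i = jwSign s i := by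
  unfold jwSign
  congr 2
  apply Finset.filter_congr
  intro j _
  by_cases hj : j = k
  · subst hj; simp [h]
  · simp [Function.update_of_ne hj]

lemma jwSign_update_of_lt {n : ℕ} {s : Fin n → Bool} {k i : Fin n} (h : k < i) (b : Bool)
    (hne : s k ≠ b) : jwSign (Function.update s k b) i = -jwSign s i := by
  unfold jwSign
  cases b with
  | false =>
    have hsk : s k = true := by revert hne; cases s k <;> simp
    have hset : Finset.univ.filter (fun j : Fin n => j < i ∧ s j = true)
        = insert k (Finset.univ.filter (fun j : Fin n => j < i ∧ Function.update s k false j = true)) := by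
      ext j
      by_cases hj : j = k
      · subst hj; simp [h, hsk]
      · simp [hj, Function.update_of_ne hj]
    have hk : k ∉ Finset.univ.filter (fun j : Fin n => j < i ∧ Function.update s k false j = true) := by
      simp
    rw [hset, Finset.card_insert_of_notMem hk, pow_succ]
    ring
  | true =>
    have hsk : s k = false := by revert hne; cases s k <;> simp
    have hset : Finset.univ.filter (fun j : Fin n => j < i ∧ Function.update s k true j = true)
        = insert k (Finset.univ.filter (fun j : Fin n => j < i ∧ s j = true)) := by
      ext j
      by_cases hj : j = k
      · subst hj; simp [h]
      · simp [hj, Function.update_of_ne hj]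
    have hk : k ∉ Finset.univ.filter (fun j : Fin n => j < i ∧ s j = true) := by
      simp [hsk]
    rw [hset, Finset.card_insert_of_notMem hk, pow_succ]
    ring

/- ## Canonical anticommutation relations -/

lemma an_mul_self {n : ℕ} (i : Fin n) : an i * an i = 0 := by
  apply LinearMap.ext; intro f; funext s
  simp [an, Module.End.mul_apply]

lemma an_anticomm {n : ℕ} {i j : Fin n} (h : i ≠ j) : an i * an j = -(an j * an i) := by
  apply LinearMap.ext; intro f; funext s
  simp only [Module.End.mul_apply, LinearMap.neg_apply, Pi.neg_apply, an, LinearMap.coe_mk,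
    AddHom.coe_mk]
  rw [Function.update_of_ne h.symm, Function.update_of_ne h]
  by_cases hi : s i = false <;> by_cases hj : s j = false <;> simp [hi, hj]
  rw [Function.update_comm h]
  rcases lt_or_gt_of_ne h with hlt | hlt
  · rw [jwSign_update_of_lt hlt true (by simp [hi]), jwSign_update_of_not_lt (by exact fun hc => absurd (hc.trans hlt) (lt_irrefl _)) true]
    ring
  · rw [jwSign_update_of_not_lt (by exact fun hc => absurd (hc.trans hlt) (lt_irrefl _)) true,
      jwSign_update_of_lt hlt true (by simp [hj])]
    ring

lemma cr_anticomm {n : ℕ} {i j : Fin n} (h : i ≠ j) : cr i * cr j = -(cr j * cr i) := by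
  apply LinearMap.ext; intro f; funext s
  simp only [Module.End.mul_apply, LinearMap.neg_apply, Pi.neg_apply, cr, LinearMap.coe_mk,
    AddHom.coe_mk]
  rw [Function.update_of_ne h.symm, Function.update_of_ne h]
  by_cases hi : s i = true <;> by_cases hj : s j = true <;> simp [hi, hj]
  rw [Function.update_comm h]
  rcases lt_or_gt_of_ne h with hlt | hlt
  · rw [jwSign_update_of_lt hlt false (by simp [hi]), jwSign_update_of_not_lt (by exact fun hc => absurd (hc.trans hlt) (lt_irrefl _)) false]
    ring
  · rw [jwSign_update_of_not_lt (by exact fun hc => absurd (hc.trans hlt) (lt_irrefl _)) false,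
      jwSign_update_of_lt hlt false (by simp [hj])]
    ring

lemma an_cr_anticomm {n : ℕ} {i j : Fin n} (h : i ≠ j) : an i * cr j = -(cr j * an i) := by
  apply LinearMap.ext; intro f; funext s
  simp only [Module.End.mul_apply, LinearMap.neg_apply, Pi.neg_apply, an, cr, LinearMap.coe_mk,
    AddHom.coe_mk]
  rw [Function.update_of_ne h.symm, Function.update_of_ne h]
  by_cases hi : s i = false <;> by_cases hj : s j = true <;> simp [hi, hj]
  rw [Function.update_comm h]
  rcases lt_or_gt_of_ne h with hlt | hlt
  · rw [jwSign_update_of_lt hlt true (by simp [hi]), jwSign_update_of_not_lt (by exact fun hc => absurd (hc.trans hlt) (lt_irrefl _)) false]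
    ring
  · rw [jwSign_update_of_not_lt (by exact fun hc => absurd (hc.trans hlt) (lt_irrefl _)) true,
      jwSign_update_of_lt hlt false (by simp [hj])]
    ring

lemma cr_an_anticomm {n : ℕ} {i j : Fin n} (h : i ≠ j) : cr i * an j = -(an j * cr i) := by
  rw [an_cr_anticomm h.symm, neg_neg]

/- ## Abstract ring lemmas for moving anticommuting factors around -/

section RingLemmas
variable {A : Type*} [Ring A]

lemma qsymm {x y : A} (h : x*y = -(y*x)) : y*x = -(x*y) := by rw [h, neg_neg]

lemma qAC_mul {x y z : A} (h1 : x*y = -(y*x)) (h2 : x*z = -(z*x)) : x*(y*z) = (y*z)*x := by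
  calc x*(y*z) = (x*y)*z := (mul_assoc ..).symm
  _ = -(y*(x*z)) := by rw [h1]; noncomm_ring
  _ = -(y*(-(z*x))) := by rw [h2]
  _ = (y*z)*x := by noncomm_ring

lemma qAC_three {x y z w : A} (h1 : x*y = -(y*x)) (h2 : x*z = -(z*x)) (h3 : x*w = -(w*x)) :
    x*(y*(z*w)) = -((y*(z*w))*x) := by
  have hc := qAC_mul h2 h3
  calc x*(y*(z*w)) = (x*y)*(z*w) := (mul_assoc ..).symm
  _ = (-(y*x))*(z*w) := by rw [h1]
  _ = -(y*(x*(z*w))) := by noncomm_ring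
  _ = -(y*((z*w)*x)) := by rw [hc]
  _ = -((y*(z*w))*x) := by noncomm_ring

lemma zero_adj {y z b d e : A} (hbb : b*b = 0) : (y*(z*b))*(b*(d*e)) = 0 := by
  have : (y*(z*b))*(b*(d*e)) = y*(z*((b*b)*(d*e))) := by noncomm_ring
  rw [this, hbb]; simp

lemma zero_sq {y z b u v : A} (hbb : b*b = 0) (h3 : b*u = -(u*b)) (h4 : b*v = -(v*b)) :
    (y*(z*b))*(u*(v*b)) = 0 := by
  have c2 : b*(u*v) = (u*v)*b := qAC_mul h3 h4
  have key : b*(u*(v*b)) = 0 := by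
    calc b*(u*(v*b)) = (b*(u*v))*b := by noncomm_ring
    _ = ((u*v)*b)*b := by rw [c2]
    _ = (u*v)*(b*b) := mul_assoc ..
    _ = 0 := by rw [hbb, mul_zero]
  calc (y*(z*b))*(u*(v*b)) = y*(z*(b*(u*(v*b)))) := by noncomm_ring
  _ = 0 := by rw [key]; simp

lemma zero_wrap {b y z u v : A} (hbb : b*b = 0) (h1 : b*y = -(y*b)) (h2 : b*z = -(z*b))
    (h3 : b*u = -(u*b)) (h4 : b*v = -(v*b)) : (b*(y*z))*(u*(v*b)) = 0 := by
  have c1 : b*(y*z) = (y*z)*b := qAC_mul h1 h2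
  have c2 : b*(u*v) = (u*v)*b := qAC_mul h3 h4
  have c3 : b*((y*z)*(u*v)) = ((y*z)*(u*v))*b := by
    calc b*((y*z)*(u*v)) = (b*(y*z))*(u*v) := (mul_assoc ..).symm
    _ = ((y*z)*b)*(u*v) := by rw [c1]
    _ = (y*z)*(b*(u*v)) := mul_assoc ..
    _ = (y*z)*((u*v)*b) := by rw [c2]
    _ = ((y*z)*(u*v))*b := (mul_assoc ..).symm
  calc (b*(y*z))*(u*(v*b)) = (b*((y*z)*(u*v)))*b := by noncomm_ring
  _ = (((y*z)*(u*v))*b)*b := by rw [c3]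
  _ = ((y*z)*(u*v))*(b*b) := mul_assoc ..
  _ = 0 := by rw [hbb, mul_zero]

lemma qAC_33 {a b c x y z : A}
    (hax : a*x = -(x*a)) (hay : a*y = -(y*a)) (haz : a*z = -(z*a))
    (hbx : b*x = -(x*b)) (hby : b*y = -(y*b)) (hbz : b*z = -(z*b))
    (hcx : c*x = -(x*c)) (hcy : c*y = -(y*c)) (hcz : c*z = -(z*c)) :
    (x*(y*z))*(a*(b*c)) = -((a*(b*c))*(x*(y*z))) := by
  have h1 : a*(x*(y*z)) = -((x*(y*z))*a) := qAC_three hax hay haz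
  have h2 : b*(x*(y*z)) = -((x*(y*z))*b) := qAC_three hbx hby hbz
  have h3 : c*(x*(y*z)) = -((x*(y*z))*c) := qAC_three hcx hcy hcz
  exact qAC_three (qsymm h1) (qsymm h2) (qsymm h3)

end RingLemmas

/- ## The supercharge as a sum of products -/

noncomputable def Qi {m : ℕ} (i : Fin m) : FockSpace (2*m+1) →ₗ[ℚ] FockSpace (2*m+1) :=
  an (⟨2*i.1, by have := i.isLt; omega⟩ : Fin (2*m+1)) *
    (cr (⟨2*i.1+1, by have := i.isLt; omega⟩ : Fin (2*m+1)) *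
      an (⟨2*i.1+2, by have := i.isLt; omega⟩ : Fin (2*m+1)))

lemma nicolaiQ_eq (m : ℕ) : nicolaiQ m = ∑ i : Fin m, Qi i := rfl

lemma Qi_eq {m : ℕ} (i : Fin m) (p q r : ℕ) (hp : 2*i.1 = p) (hq : 2*i.1+1 = q)
    (hr : 2*i.1+2 = r) (h0 : p < 2*m+1) (h1 : q < 2*m+1) (h2 : r < 2*m+1) :
    Qi i = an (⟨p, h0⟩ : Fin (2*m+1)) * (cr ⟨q, h1⟩ * an ⟨r, h2⟩) := by
  subst hp hq hr; rfl

lemma Qi_pair {m : ℕ} (i j : Fin m) : Qi i * Qi j + Qi j * Qi i = 0 := by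
  have hi := i.isLt
  have hj := j.isLt
  rcases eq_or_ne i j with rfl | hij
  · have z : Qi i * Qi i = 0 := by
      rw [Qi_eq i (2*i.1) (2*i.1+1) (2*i.1+2) rfl rfl rfl (by omega) (by omega) (by omega)]
      exact zero_sq (an_mul_self _)
        (an_anticomm (Fin.ne_of_val_ne (show 2*i.1+2 ≠ 2*i.1 by omega)))
        (an_cr_anticomm (Fin.ne_of_val_ne (show 2*i.1+2 ≠ 2*i.1+1 by omega)))
    rw [z]; simp
  · by_cases hadj : j.1 = i.1 + 1
    · rw [Qi_eq i (2*i.1) (2*i.1+1) (2*i.1+2) rfl rfl rfl (by omega) (by omega) (by omega),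
        Qi_eq j (2*i.1+2) (2*i.1+3) (2*i.1+4) (by omega) (by omega) (by omega)
          (by omega) (by omega) (by omega)]
      rw [zero_adj (an_mul_self _),
        zero_wrap (an_mul_self _)
          (an_cr_anticomm (Fin.ne_of_val_ne (show 2*i.1+2 ≠ 2*i.1+3 by omega)))
          (an_anticomm (Fin.ne_of_val_ne (show 2*i.1+2 ≠ 2*i.1+4 by omega)))
          (an_anticomm (Fin.ne_of_val_ne (show 2*i.1+2 ≠ 2*i.1 by omega)))
          (an_cr_anticomm (Fin.ne_of_val_ne (show 2*i.1+2 ≠ 2*i.1+1 by omega)))]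
      simp
    · by_cases hadj' : i.1 = j.1 + 1
      · rw [Qi_eq j (2*j.1) (2*j.1+1) (2*j.1+2) rfl rfl rfl (by omega) (by omega) (by omega),
          Qi_eq i (2*j.1+2) (2*j.1+3) (2*j.1+4) (by omega) (by omega) (by omega)
            (by omega) (by omega) (by omega)]
        rw [zero_adj (an_mul_self _),
          zero_wrap (an_mul_self _)
            (an_cr_anticomm (Fin.ne_of_val_ne (show 2*j.1+2 ≠ 2*j.1+3 by omega)))
            (an_anticomm (Fin.ne_of_val_ne (show 2*j.1+2 ≠ 2*j.1+4 by omega)))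
            (an_anticomm (Fin.ne_of_val_ne (show 2*j.1+2 ≠ 2*j.1 by omega)))
            (an_cr_anticomm (Fin.ne_of_val_ne (show 2*j.1+2 ≠ 2*j.1+1 by omega)))]
        simp
      · -- disjoint supports: full anticommutation
        have hij' : i.1 ≠ j.1 := fun h => hij (Fin.ext h)
        rw [Qi_eq i (2*i.1) (2*i.1+1) (2*i.1+2) rfl rfl rfl (by omega) (by omega) (by omega),
          Qi_eq j (2*j.1) (2*j.1+1) (2*j.1+2) rfl rfl rfl (by omega) (by omega) (by omega)]
        rw [qAC_33
          (an_anticomm (Fin.ne_of_val_ne (show 2*j.1 ≠ 2*i.1 by omega)))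
          (an_cr_anticomm (Fin.ne_of_val_ne (show 2*j.1 ≠ 2*i.1+1 by omega)))
          (an_anticomm (Fin.ne_of_val_ne (show 2*j.1 ≠ 2*i.1+2 by omega)))
          (cr_an_anticomm (Fin.ne_of_val_ne (show 2*j.1+1 ≠ 2*i.1 by omega)))
          (cr_anticomm (Fin.ne_of_val_ne (show 2*j.1+1 ≠ 2*i.1+1 by omega)))
          (cr_an_anticomm (Fin.ne_of_val_ne (show 2*j.1+1 ≠ 2*i.1+2 by omega)))
          (an_anticomm (Fin.ne_of_val_ne (show 2*j.1+2 ≠ 2*i.1 by omega)))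
          (an_cr_anticomm (Fin.ne_of_val_ne (show 2*j.1+2 ≠ 2*i.1+1 by omega)))
          (an_anticomm (Fin.ne_of_val_ne (show 2*j.1+2 ≠ 2*i.1+2 by omega)))]
        exact neg_add_cancel _

/-- the Nicolai supercharge `Q` satisfies `Q² = 0`. -/
theorem nicolaiQ_sq_eq_zero (m : ℕ) (hm : 1 ≤ m) :
    nicolaiQ m ∘ₗ nicolaiQ m = 0 := by
  rw [← Module.End.mul_eq_comp, nicolaiQ_eq, Finset.sum_mul_sum]
  have h2 : (∑ i : Fin m, ∑ j : Fin m, Qi i * Qi j)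
      + (∑ i : Fin m, ∑ j : Fin m, Qi i * Qi j) = 0 := by
    nth_rewrite 2 [Finset.sum_comm]
    rw [← Finset.sum_add_distrib]
    rw [show (∑ i : Fin m, ((∑ j : Fin m, Qi i * Qi j) + ∑ j : Fin m, Qi j * Qi i))
        = ∑ i : Fin m, ∑ j : Fin m, (Qi i * Qi j + Qi j * Qi i) from by
      apply Finset.sum_congr rfl; intro i _; rw [← Finset.sum_add_distrib]]
    simp [Qi_pair]
  have h3 : (2:ℚ) • (∑ i : Fin m, ∑ j : Fin m, Qi i * Qi j) = 0 := by
    rw [two_smul]; exact h2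
  rcases smul_eq_zero.mp h3 with h | h
  · norm_num at h
  · exact h
end

section
/- Let P^{Z2}_n(z) be defined by P^{Z2}_0 = 1, P^{Z2}_1 = 1+z, P^{Z2}_2 = (1+z)², and P^{Z2}_n = 2z P^{Z2}_{n-2} + (z+z²) P^{Z2}_{n-3} for n ≥ 3. Then P^{Z2}_n is palindromic of degree n: z^n P^{Z2}_n(1/z) = P^{Z2}_n(z) for all n ≥ 0. -/
/-!
Encode "palindromic of degree `n`" as `natDegree p ≤ n ∧ reflect n p = p`. As `reflect` is
additive and multiplicative along degree bounds, these polynomials are closed under sums of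
equal degree and under products, degrees adding. The multipliers `2X` and `X + X² = X(1 + X)`
of the recursion are palindromic of degrees `2` and `3`, so strong induction along the
recursion makes `P n` palindromic of degree `n`.
-/

open Polynomial

namespace Polynomial

variable {R : Type*} [Semiring R] {m n : ℕ} {p q : R[X]}

def IsPalindromic (n : ℕ) (p : R[X]) : Prop :=
  p.natDegree ≤ n ∧ reflect n p = p

namespace IsPalindromic

theorem coeff_eq (h : IsPalindromic n p) {k : ℕ} (hk : k ≤ n) :
    p.coeff k = p.coeff (n - k) := by
  rw [← revAt_le hk, ← coeff_reflect, h.2]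

theorem add (hp : IsPalindromic n p) (hq : IsPalindromic n q) : IsPalindromic n (p + q) :=
  ⟨(natDegree_add_le p q).trans (max_le hp.1 hq.1), by rw [reflect_add, hp.2, hq.2]⟩

theorem mul (hp : IsPalindromic m p) (hq : IsPalindromic n q) :
    IsPalindromic (m + n) (p * q) :=
  ⟨natDegree_mul_le.trans (add_le_add hp.1 hq.1), by rw [reflect_mul p q hp.1 hq.1, hp.2, hq.2]⟩

end IsPalindromic

theorem isPalindromic_one : IsPalindromic 0 (1 : R[X]) :=
  ⟨natDegree_one.le, by simp⟩

theorem isPalindromic_X : IsPalindromic 2 (X : R[X]) :=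
  ⟨natDegree_X_le.trans one_le_two, by simpa using reflect_monomial (R := R) 2 1⟩

theorem isPalindromic_one_add_X : IsPalindromic 1 (1 + X : R[X]) := by
  refine ⟨natDegree_add_le_of_degree_le (by simp) natDegree_X_le, ?_⟩
  simp [reflect_add, add_comm]

theorem isPalindromic_two_mul_X : IsPalindromic 2 (2 * X : R[X]) :=
  two_mul (X : R[X]) ▸ isPalindromic_X.add isPalindromic_X

theorem isPalindromic_X_add_X_sq : IsPalindromic 3 (X + X ^ 2 : R[X]) := by
  rw [sq, ← mul_one_add X X]
  exact isPalindromic_X.mul isPalindromic_one_add_X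

end Polynomial

/-- the `ℤ₂` Nicolai ground-state generating polynomials `P^{ℤ₂}_n` are
palindromic of degree `n`: the coefficient of `z^k` equals the coefficient of
`z^{n-k}`, i.e. `z^n P^{ℤ₂}_n(1/z) = P^{ℤ₂}_n(z)`. -/
theorem z2_poly_palindromic (P : ℕ → Polynomial ℤ)
    (h0 : P 0 = 1)
    (h1 : P 1 = 1 + X)
    (h2 : P 2 = (1 + X)^2)
    (hrec : ∀ n, 3 ≤ n → P n = 2*X * P (n-2) + (X + X^2) * P (n-3)) :
    ∀ n, ∀ k, k ≤ n → (P n).coeff k = (P n).coeff (n-k) := by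
  have hpal : ∀ n, IsPalindromic n (P n) := by
    intro n
    induction n using Nat.strong_induction_on with
    | _ n ih =>
      match n with
      | 0 => exact h0 ▸ isPalindromic_one
      | 1 => exact h1 ▸ isPalindromic_one_add_X
      | 2 => exact h2 ▸ sq (1 + X : ℤ[X]) ▸
          isPalindromic_one_add_X.mul isPalindromic_one_add_X
      | m + 3 =>
        have h2X := isPalindromic_two_mul_X.mul (ih (m + 1) (by omega))
        have hXX2 := isPalindromic_X_add_X_sq.mul (ih m (by omega))
        rw [show 2 + (m + 1) = m + 3 by omega] at h2X
        rw [show 3 + m = m + 3 by omega] at hXX2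
        simpa [hrec (m + 3) (by omega)] using h2X.add hXX2
  exact fun n k hk => (hpal n).coeff_eq hk
end

section
/- (Homological perturbation lemma, special case.) Let H be a chain complex of vector spaces with two anticommuting-square differentials: d₁, d₂ : H → H with d₁² = 0, d₂² = 0, d₁d₂ + d₂d₁ = 0. Suppose there are maps i : K → H, p : H → K, h : H → H such that p∘i = id_K, i∘p = id_H + d₁h + hd₁, p and i are chain maps between (K,0) and (H,d₁), and additionally h∘d₂∘h = 0 and p∘d₂∘h∘d₂∘i = 0. Set D := p∘d₂∘i. Then D² = 0 and there is a linear isomorphism ker(d₁+d₂)/im(d₁+d₂) ≅ ker D / im D. -/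
/-- homological perturbation lemma, special case: given differentials
`d₁, d₂` with `d₁² = d₂² = 0`, `d₁d₂ + d₂d₁ = 0`, a deformation retract `(i, p, h)` of
`(H, d₁)` onto its homology `(K, 0)` (so `p∘i = id`, `i∘p = id + d₁h + hd₁`, and `i`,
`p` are chain maps), and the side conditions `h d₂ h = 0` and `p d₂ h d₂ i = 0`, the
perturbed differential `D = p∘d₂∘i` satisfies `D² = 0` and the homology of `d₁ + d₂`
is isomorphic to the homology of `D`. -/
theorem homological_perturbation_special {F H K : Type*} [Field F]
    [AddCommGroup H] [Module F H] [AddCommGroup K] [Module F K]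
    (d1 d2 : H →ₗ[F] H) (i : K →ₗ[F] H) (p : H →ₗ[F] K) (h : H →ₗ[F] H)
    (hd1 : d1 ∘ₗ d1 = 0) (hd2 : d2 ∘ₗ d2 = 0)
    (hanti : d1 ∘ₗ d2 + d2 ∘ₗ d1 = 0)
    (hpi : p ∘ₗ i = LinearMap.id)
    (hip : i ∘ₗ p = LinearMap.id + d1 ∘ₗ h + h ∘ₗ d1)
    (hchain_i : d1 ∘ₗ i = 0) (hchain_p : p ∘ₗ d1 = 0)
    (hhdh : h ∘ₗ d2 ∘ₗ h = 0)
    (hside : p ∘ₗ d2 ∘ₗ h ∘ₗ d2 ∘ₗ i = 0) :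
    (p ∘ₗ d2 ∘ₗ i) ∘ₗ (p ∘ₗ d2 ∘ₗ i) = 0 ∧
    Nonempty
      ((LinearMap.ker (d1 + d2) ⧸
          (LinearMap.range (d1 + d2)).comap (LinearMap.ker (d1 + d2)).subtype) ≃ₗ[F]
        (LinearMap.ker (p ∘ₗ d2 ∘ₗ i) ⧸
          (LinearMap.range (p ∘ₗ d2 ∘ₗ i)).comap
            (LinearMap.ker (p ∘ₗ d2 ∘ₗ i)).subtype)) := by
  have f1 : ∀ x : H, d1 (d1 x) = 0 := fun x => by
    simpa using LinearMap.congr_fun hd1 x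
  have f2 : ∀ x : H, d2 (d2 x) = 0 := fun x => by
    simpa using LinearMap.congr_fun hd2 x
  have f3 : ∀ x : H, d1 (d2 x) = - d2 (d1 x) := fun x => by
    have := LinearMap.congr_fun hanti x
    simp only [LinearMap.add_apply, LinearMap.comp_apply, LinearMap.zero_apply] at this
    exact eq_neg_of_add_eq_zero_left this
  have f4 : ∀ x : K, p (i x) = x := fun x => by
    simpa using LinearMap.congr_fun hpi x
  have f5 : ∀ x : H, i (p x) = x + d1 (h x) + h (d1 x) := fun x => by
    simpa using LinearMap.congr_fun hip x
  have f6 : ∀ x : K, d1 (i x) = 0 := fun x => by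
    simpa using LinearMap.congr_fun hchain_i x
  have f7 : ∀ x : H, p (d1 x) = 0 := fun x => by
    simpa using LinearMap.congr_fun hchain_p x
  have f8 : ∀ x : H, h (d2 (h x)) = 0 := fun x => by
    simpa using LinearMap.congr_fun hhdh x
  have f9 : ∀ x : K, p (d2 (h (d2 (i x)))) = 0 := fun x => by
    simpa using LinearMap.congr_fun hside x
  -- derived facts
  have f10 : ∀ x : H, p (h (d1 x)) = 0 := by
    intro x
    have e := congrArg p (f5 x)
    simp only [map_add, f4, f7, add_zero, zero_add] at e
    exact left_eq_add.mp e
  have f11 : ∀ x : K, d1 (h (i x)) = 0 := by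
    intro x
    have e := f5 (i x)
    simp only [f4, f6, map_zero, add_zero] at e
    exact left_eq_add.mp e
  have g1 : ∀ x : K, d1 (d2 (i x)) = 0 := by
    intro x
    rw [f3, f6, map_zero, neg_zero]
  have g2 : ∀ x : H, p (d2 (d1 x)) = 0 := by
    intro x
    have : p (d1 (d2 x)) = 0 := f7 _
    rw [f3, map_neg] at this
    simpa using this
  have f13 : ∀ x : H, p (d2 (h (d2 x))) = - p (d2 (h (d2 (d1 (h x))))) := by
    intro x
    have e := congrArg (fun z => p (d2 (h (d2 z)))) (f5 x)
    simp only [map_add, f9, f8, map_zero, add_zero, zero_add] at e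
    exact eq_neg_of_add_eq_zero_left e.symm
  have f14 : ∀ x : K, d2 (h (d2 (i x))) = h (d2 (d1 (h (d2 (i x))))) := by
    intro x
    have e := f5 (d2 (h (d2 (i x))))
    rw [f9, map_zero, f8, map_zero, add_zero, f3, map_neg] at e
    linear_combination (norm := module) -e
  -- the main identities
  have hA : ∀ x : K, (p ∘ₗ d2 ∘ₗ i) ((p ∘ₗ d2 ∘ₗ i) x) = 0 := by
    intro x
    simp only [LinearMap.comp_apply, f5, map_add, f2, g1, g2, map_zero, add_zero, zero_add]
  have hB : ∀ x : H,
      (p + p ∘ₗ d2 ∘ₗ h) ((d1 + d2) x) = (p ∘ₗ d2 ∘ₗ i) ((p + p ∘ₗ d2 ∘ₗ h) x) := by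
    intro x
    have e1 : p (d2 (h (d1 (d2 (h x))))) = - p (d2 (h (d2 (d1 (h x))))) := by
      have := congrArg (fun z => p (d2 (h z))) (f3 (h x))
      simpa using this
    simp only [LinearMap.add_apply, LinearMap.comp_apply, map_add, f5, f2, f7, f8,
      g1, g2, map_zero, add_zero, zero_add]
    linear_combination (norm := module) f13 x - e1
  have hC : ∀ x : K,
      (d1 + d2) ((i + h ∘ₗ d2 ∘ₗ i) x) = (i + h ∘ₗ d2 ∘ₗ i) ((p ∘ₗ d2 ∘ₗ i) x) := by
    intro x
    simp only [LinearMap.add_apply, LinearMap.comp_apply, map_add, f5, f2, f6,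
      g1, g2, map_zero, add_zero, zero_add]
    linear_combination (norm := module) f14 x
  have hD : ∀ x : H,
      (i + h ∘ₗ d2 ∘ₗ i) ((p + p ∘ₗ d2 ∘ₗ h) x)
        = x + (d1 + d2) (h x) + h ((d1 + d2) x) := by
    intro x
    have e2 : h (d1 (d2 (h x))) = - h (d2 (d1 (h x))) := by
      have := congrArg h (f3 (h x))
      simpa using this
    simp only [LinearMap.add_apply, LinearMap.comp_apply, map_add, f5, f2, f8,
      g1, g2, map_zero, add_zero, zero_add]
    linear_combination (norm := module) e2
  have hE : ∀ x : K, (p ∘ₗ d2 ∘ₗ i) x = 0 →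
      (p + p ∘ₗ d2 ∘ₗ h) ((i + h ∘ₗ d2 ∘ₗ i) x)
        = x + (p ∘ₗ d2 ∘ₗ i) (p (h (i x)) + p (h (h (d2 (i x))))) := by
    intro x hx
    simp only [LinearMap.comp_apply] at hx
    -- y = d2 (i x) satisfies y = - d1 (h y)
    have hy : d2 (i x) = - d1 (h (d2 (i x))) := by
      have e := f5 (d2 (i x))
      rw [hx, map_zero, g1, map_zero, add_zero] at e
      linear_combination (norm := module) -e
    have hA0 : p (h (d2 (i x))) = 0 := by
      rw [hy, map_neg, map_neg, f10, neg_zero]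
    have hd1hu : d1 (h (h (d2 (i x)))) = 0 := by
      have e := f5 (h (d2 (i x)))
      rw [hA0, map_zero] at e
      rw [show d1 (h (d2 (i x))) = - d2 (i x) by linear_combination (norm := module) hy] at e
      simp only [map_neg] at e
      rw [show h (d2 (i x)) = h (d2 (i x)) from rfl] at e
      linear_combination (norm := module) -e
    simp only [LinearMap.add_apply, LinearMap.comp_apply, map_add, f4, f5, f11, hA0, hd1hu,
      g1, g2, map_zero, add_zero, zero_add]
    abel
  refine ⟨by ext x; simpa using hA x, ?_⟩
  -- build the induced map on homology quotients
  have hmem : ∀ x ∈ LinearMap.ker (d1 + d2),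
      (p + p ∘ₗ d2 ∘ₗ h) x ∈ LinearMap.ker (p ∘ₗ d2 ∘ₗ i) := by
    intro x hx
    rw [LinearMap.mem_ker] at hx ⊢
    rw [← hB x, hx, map_zero]
  set Pres : LinearMap.ker (d1 + d2) →ₗ[F] LinearMap.ker (p ∘ₗ d2 ∘ₗ i) :=
    (p + p ∘ₗ d2 ∘ₗ h).restrict hmem with hPres
  have hle : (LinearMap.range (d1 + d2)).comap (LinearMap.ker (d1 + d2)).subtype ≤
      ((LinearMap.range (p ∘ₗ d2 ∘ₗ i)).comap
        (LinearMap.ker (p ∘ₗ d2 ∘ₗ i)).subtype).comap Pres := by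
    rintro ⟨x, hxk⟩ hxr
    simp only [Submodule.mem_comap, Submodule.coe_subtype, LinearMap.mem_range] at hxr ⊢
    obtain ⟨y, hy⟩ := hxr
    refine ⟨p y + p (d2 (h y)), ?_⟩
    have : ((Pres ⟨x, hxk⟩ : LinearMap.ker (p ∘ₗ d2 ∘ₗ i)) : K)
        = (p + p ∘ₗ d2 ∘ₗ h) x := rfl
    rw [this, ← hy, hB y]
    simp [LinearMap.add_apply, LinearMap.comp_apply]
  set Pbar := Submodule.mapQ _ _ Pres hle with hPbar
  refine ⟨LinearEquiv.ofBijective Pbar ⟨?_, ?_⟩⟩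
  · -- injectivity
    rw [injective_iff_map_eq_zero]
    intro a ha
    obtain ⟨z, rfl⟩ := Submodule.Quotient.mk_surjective _ a
    rw [hPbar, Submodule.mapQ_apply, Submodule.Quotient.mk_eq_zero] at ha
    rw [Submodule.mem_comap, Submodule.coe_subtype, LinearMap.mem_range] at ha
    obtain ⟨w, hw⟩ := ha
    rw [Submodule.Quotient.mk_eq_zero, Submodule.mem_comap, Submodule.coe_subtype,
      LinearMap.mem_range]
    refine ⟨(i + h ∘ₗ d2 ∘ₗ i) w - h (z : H), ?_⟩
    have hwz : ((Pres z : LinearMap.ker (p ∘ₗ d2 ∘ₗ i)) : K)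
        = (p + p ∘ₗ d2 ∘ₗ h) (z : H) := rfl
    rw [hwz] at hw
    have hz0 : (d1 + d2) (z : H) = 0 := z.2
    have := hD (z : H)
    rw [hz0, map_zero, add_zero] at this
    rw [map_sub, hC w, hw, this]
    abel
  · -- surjectivity
    intro b
    obtain ⟨x, rfl⟩ := Submodule.Quotient.mk_surjective _ b
    have hx0 : (p ∘ₗ d2 ∘ₗ i) (x : K) = 0 := x.2
    have hz : (i + h ∘ₗ d2 ∘ₗ i) (x : K) ∈ LinearMap.ker (d1 + d2) := by
      rw [LinearMap.mem_ker, hC, hx0, map_zero]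
    refine ⟨Submodule.Quotient.mk ⟨(i + h ∘ₗ d2 ∘ₗ i) (x : K), hz⟩, ?_⟩
    rw [hPbar, Submodule.mapQ_apply, Submodule.Quotient.eq]
    rw [Submodule.mem_comap, Submodule.coe_subtype, LinearMap.mem_range]
    refine ⟨p (h (i (x : K))) + p (h (h (d2 (i (x : K))))), ?_⟩
    have hP : ((Pres ⟨(i + h ∘ₗ d2 ∘ₗ i) (x : K), hz⟩ : LinearMap.ker (p ∘ₗ d2 ∘ₗ i)) : K)
        = (p + p ∘ₗ d2 ∘ₗ h) ((i + h ∘ₗ d2 ∘ₗ i) (x : K)) := rfl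
    have := hE (x : K) hx0
    rw [AddSubgroupClass.coe_sub, hP, this]
    abel
end

section
/- In the exterior algebra Λ[c₁†,…,c_{2m+1}†] with differential d₁ = c_{2m-1} c_{2m}† c_{2m+1} (annihilation operators acting as graded derivatives), one has d₁² = 0, and the homology of d₁ has dimension 6·2^{2m-2}, i.e., dim ker d₁ − dim im d₁ = 6·4^{m-1}. -/
lemma jwSign_ne_zero {n : ℕ} (s : Fin n → Bool) (i : Fin n) : jwSign s i ≠ 0 := by
  simp [jwSign]

section D1
variable {n : ℕ} (a b c : Fin n)

/-- the flip from the "target pattern" (0,1,0) to the "source pattern" (1,0,1) -/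
def flipS {n : ℕ} (a b c : Fin n) (s : Fin n → Bool) : Fin n → Bool :=
  Function.update (Function.update (Function.update s a true) b false) c true

lemma d1_apply (hab : a ≠ b) (hac : a ≠ c) (hbc : b ≠ c) (f : FockSpace n) (s : Fin n → Bool) :
    (an a ∘ₗ cr b ∘ₗ an c) f s =
      if s a = false ∧ s b = true ∧ s c = false then
        (jwSign s a * jwSign (Function.update s a true) b *
          jwSign (Function.update (Function.update s a true) b false) c) *
          f (flipS a b c s) else 0 := by
  simp only [LinearMap.comp_apply, an, cr, LinearMap.coe_mk, AddHom.coe_mk, flipS]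
  by_cases h1 : s a = false
  · rw [if_pos h1]
    rw [Function.update_of_ne hab.symm]
    by_cases h2 : s b = true
    · rw [if_pos h2]
      rw [Function.update_of_ne hbc.symm, Function.update_of_ne hac.symm]
      by_cases h3 : s c = false
      · rw [if_pos h3, if_pos ⟨h1, h2, h3⟩]; ring
      · rw [if_neg h3, mul_zero, mul_zero, if_neg (by tauto)]
    · rw [if_neg h2, mul_zero, if_neg (by tauto)]
  · rw [if_neg h1, if_neg (by tauto)]
end D1

section D1'
variable {n : ℕ} (a b c : Fin n)

def flipT {n : ℕ} (a b c : Fin n) (t : Fin n → Bool) : Fin n → Bool :=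
  Function.update (Function.update (Function.update t a false) b true) c false

lemma flipS_a (hab : a ≠ b) (hac : a ≠ c) (s : Fin n → Bool) : flipS a b c s a = true := by
  simp [flipS, Function.update_of_ne hac, Function.update_of_ne hab]

lemma flipS_b (hbc : b ≠ c) (s : Fin n → Bool) : flipS a b c s b = false := by
  simp [flipS, Function.update_of_ne hbc]

lemma flipS_c (s : Fin n → Bool) : flipS a b c s c = true := by
  simp [flipS]

lemma flipT_a (hab : a ≠ b) (hac : a ≠ c) (t : Fin n → Bool) : flipT a b c t a = false := by
  simp [flipT, Function.update_of_ne hac, Function.update_of_ne hab]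

lemma flipT_b (hbc : b ≠ c) (t : Fin n → Bool) : flipT a b c t b = true := by
  simp [flipT, Function.update_of_ne hbc]

lemma flipT_c (t : Fin n → Bool) : flipT a b c t c = false := by
  simp [flipT]

lemma flipS_flipT (t : Fin n → Bool) (ha : t a = true) (hb : t b = false) (hc : t c = true) :
    flipS a b c (flipT a b c t) = t := by
  funext x
  by_cases hxc : x = c
  · subst hxc; simp [flipS, hc]
  by_cases hxb : x = b
  · subst hxb
    simp [flipS, flipT, Function.update_of_ne hxc, hb]
  by_cases hxa : x = a
  · subst hxa
    simp [flipS, flipT, Function.update_of_ne hxc, Function.update_of_ne hxb, ha]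
  · simp [flipS, flipT, Function.update_of_ne hxc, Function.update_of_ne hxb,
      Function.update_of_ne hxa]

lemma ker_iff (hab : a ≠ b) (hac : a ≠ c) (hbc : b ≠ c) (f : FockSpace n) :
    (an a ∘ₗ cr b ∘ₗ an c) f = 0 ↔
      ∀ t, t a = true → t b = false → t c = true → f t = 0 := by
  constructor
  · intro h t ha hb hc
    have h0 := congrFun h (flipT a b c t)
    rw [d1_apply a b c hab hac hbc, if_pos ⟨flipT_a a b c hab hac t, flipT_b a b c hbc t,
      flipT_c a b c t⟩, flipS_flipT a b c t ha hb hc] at h0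
    have hne : (jwSign (flipT a b c t) a * jwSign (Function.update (flipT a b c t) a true) b *
        jwSign (Function.update (Function.update (flipT a b c t) a true) b false) c) ≠ 0 :=
      mul_ne_zero (mul_ne_zero (jwSign_ne_zero _ _) (jwSign_ne_zero _ _)) (jwSign_ne_zero _ _)
    exact (mul_eq_zero.mp h0).resolve_left hne
  · intro h
    funext s
    rw [d1_apply a b c hab hac hbc]
    split_ifs with hs
    · rw [h _ (flipS_a a b c hab hac s) (flipS_b a b c hbc s) (flipS_c a b c s), mul_zero]
      rfl
    · rfl

end D1'

lemma d1_sq {n : ℕ} (a b c : Fin n) (hab : a ≠ b) (hac : a ≠ c) (hbc : b ≠ c) :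
    (an a ∘ₗ cr b ∘ₗ an c) ∘ₗ (an a ∘ₗ cr b ∘ₗ an c) = 0 := by
  apply LinearMap.ext; intro f
  rw [LinearMap.comp_apply, LinearMap.zero_apply]
  rw [ker_iff a b c hab hac hbc]
  intro t ha hb hc
  rw [d1_apply a b c hab hac hbc, if_neg (by simp [ha])]

/-- restriction to a subtype of configurations -/
noncomputable def restr {n : ℕ} (P : (Fin n → Bool) → Prop) :
    FockSpace n →ₗ[ℚ] ({s // P s} → ℚ) where
  toFun f t := f t.1
  map_add' _ _ := rfl
  map_smul' _ _ := rfl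

lemma restr_surjective {n : ℕ} (P : (Fin n → Bool) → Prop) :
    Function.Surjective (restr P) := by
  classical
  intro g
  exact ⟨fun s => if h : P s then g ⟨s, h⟩ else 0, by funext t; simp [restr, t.2]⟩

lemma ker_d1_eq {n : ℕ} (a b c : Fin n) (hab : a ≠ b) (hac : a ≠ c) (hbc : b ≠ c) :
    LinearMap.ker (an a ∘ₗ cr b ∘ₗ an c) =
      LinearMap.ker (restr (fun s => s a = true ∧ s b = false ∧ s c = true)) := by
  ext f
  rw [LinearMap.mem_ker, LinearMap.mem_ker, ker_iff a b c hab hac hbc]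
  constructor
  · intro h; funext t; exact h t.1 t.2.1 t.2.2.1 t.2.2.2
  · intro h t ha hb hc; exact congrFun h ⟨t, ha, hb, hc⟩

lemma card_pattern {n : ℕ} (a b c : Fin n) (hab : a ≠ b) (hac : a ≠ c) (hbc : b ≠ c) :
    Fintype.card {s : Fin n → Bool // s a = true ∧ s b = false ∧ s c = true} = 2 ^ (n - 3) := by
  classical
  have e : {s : Fin n → Bool // s a = true ∧ s b = false ∧ s c = true} ≃
      ({x : Fin n // x ≠ a ∧ x ≠ b ∧ x ≠ c} → Bool) :=
    { toFun := fun s x => s.1 x.1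
      invFun := fun g =>
        ⟨fun x => if hxa : x = a then true else if hxb : x = b then false else
            if hxc : x = c then true else g ⟨x, hxa, hxb, hxc⟩,
          by simp [hab, hac, hbc, Ne.symm hab, Ne.symm hac, Ne.symm hbc]⟩
      left_inv := by
        rintro ⟨s, ha, hb, hc⟩
        ext x
        by_cases hxa : x = a
        · subst hxa; simp [ha]
        by_cases hxb : x = b
        · subst hxb; simp [hxa, hb]
        by_cases hxc : x = c
        · subst hxc; simp [hxa, hxb, hc]
        · simp [hxa, hxb, hxc]
      right_inv := by
        intro g
        funext x
        simp [x.2.1, x.2.2.1, x.2.2.2] }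
  rw [Fintype.card_congr e, Fintype.card_fun, Fintype.card_bool]
  congr 1
  rw [Fintype.card_subtype]
  have h : (Finset.univ.filter fun x : Fin n => x ≠ a ∧ x ≠ b ∧ x ≠ c) =
      Finset.univ \ {a, b, c} := by
    ext x; simp [not_or]
  rw [h, Finset.card_sdiff_of_subset (Finset.subset_univ _), Finset.card_univ, Fintype.card_fin]
  congr 1
  rw [Finset.card_insert_of_notMem (by simp [hab, hac]),
    Finset.card_insert_of_notMem (by simp [hbc]), Finset.card_singleton]

lemma finrank_fock (n : ℕ) : Module.finrank ℚ (FockSpace n) = 2 ^ n := by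
  rw [Module.finrank_pi, Fintype.card_fun, Fintype.card_bool, Fintype.card_fin]

lemma finrank_ker_range {n : ℕ} (a b c : Fin n) (hab : a ≠ b) (hac : a ≠ c) (hbc : b ≠ c) :
    Module.finrank ℚ (LinearMap.ker (an a ∘ₗ cr b ∘ₗ an c)) = 2 ^ n - 2 ^ (n - 3) ∧
    Module.finrank ℚ (LinearMap.range (an a ∘ₗ cr b ∘ₗ an c)) = 2 ^ (n - 3) := by
  classical
  have hcard : Fintype.card {s : Fin n → Bool // s a = true ∧ s b = false ∧ s c = true} =
      2 ^ (n - 3) := card_pattern a b c hab hac hbc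
  have hR : Module.finrank ℚ
      ({s : Fin n → Bool // s a = true ∧ s b = false ∧ s c = true} → ℚ) = 2 ^ (n - 3) := by
    rw [Module.finrank_pi, hcard]
  have hrn := LinearMap.finrank_range_add_finrank_ker
    (restr (fun s : Fin n → Bool => s a = true ∧ s b = false ∧ s c = true))
  have htop : LinearMap.range
      (restr (fun s : Fin n → Bool => s a = true ∧ s b = false ∧ s c = true)) = ⊤ :=
    LinearMap.range_eq_top.mpr (restr_surjective _)
  rw [htop, finrank_top, finrank_fock, hR] at hrn
  have hker : Module.finrank ℚ (LinearMap.ker (an a ∘ₗ cr b ∘ₗ an c)) = 2 ^ n - 2 ^ (n - 3) := by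
    have h2 := LinearEquiv.finrank_eq (R := ℚ)
      (LinearEquiv.ofEq _ _ (ker_d1_eq a b c hab hac hbc))
    rw [h2]
    exact Nat.eq_sub_of_add_eq' hrn
  have hrn2 := LinearMap.finrank_range_add_finrank_ker (an a ∘ₗ cr b ∘ₗ an c)
  rw [finrank_fock, hker] at hrn2
  have hle : 2 ^ (n - 3) ≤ 2 ^ n := Nat.pow_le_pow_right (by norm_num) (Nat.sub_le n 3)
  refine ⟨hker, ?_⟩
  have h3 := Nat.eq_sub_of_add_eq hrn2
  rwa [Nat.sub_sub_self hle] at h3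

/-- in `Λ[c₁†,…,c_{2m+1}†]`, the differential
`d₁ = c_{2m-1} c_{2m}† c_{2m+1}` (0-indexed sites `2m-2, 2m-1, 2m`) satisfies
`d₁² = 0` and its homology has dimension `6·4^{m-1} = 6·2^{2m-2}`. -/
theorem nicolai_d1_homology_dim (m : ℕ) (hm : 1 ≤ m) :
    letI d1 : FockSpace (2*m+1) →ₗ[ℚ] FockSpace (2*m+1) :=
      an (⟨2*m-2, by omega⟩ : Fin (2*m+1)) ∘ₗ
      cr (⟨2*m-1, by omega⟩ : Fin (2*m+1)) ∘ₗ
      an (⟨2*m, by omega⟩ : Fin (2*m+1))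
    d1 ∘ₗ d1 = 0 ∧
      Module.finrank ℚ (LinearMap.ker d1) - Module.finrank ℚ (LinearMap.range d1) =
        6 * 4^(m-1) := by
  have hab : (⟨2*m-2, by omega⟩ : Fin (2*m+1)) ≠ ⟨2*m-1, by omega⟩ := by
    simp [Fin.ext_iff]; omega
  have hac : (⟨2*m-2, by omega⟩ : Fin (2*m+1)) ≠ ⟨2*m, by omega⟩ := by
    simp [Fin.ext_iff]; omega
  have hbc : (⟨2*m-1, by omega⟩ : Fin (2*m+1)) ≠ ⟨2*m, by omega⟩ := by
    simp [Fin.ext_iff]; omega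
  obtain ⟨hker, hrange⟩ := finrank_ker_range _ _ _ hab hac hbc
  refine ⟨d1_sq _ _ _ hab hac hbc, ?_⟩
  rw [hker, hrange]
  obtain ⟨k, rfl⟩ : ∃ k, m = k + 1 := ⟨m - 1, by omega⟩
  have h4 : (4 : ℕ) ^ k = 2 ^ (2 * k) := by
    rw [pow_mul]; norm_num
  have h1 : 2 * (k+1) + 1 - 3 = 2 * k := by omega
  have h2 : (2:ℕ) ^ (2 * (k+1) + 1) = 8 * 2 ^ (2 * k) := by
    rw [show 2 * (k+1) + 1 = 2*k + 3 by omega, pow_add]; ring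
  simp only [h1, h2, Nat.add_sub_cancel, h4]
  omega
end

section
/- Define h := c_n† c_{n-1}† c_{n-2}† and d₁ := c_{n-2} c_{n-1} c_n on Λ[c₁†,…,c_n†] (n ≥ 3). Then id + d₁h + hd₁ is the projection onto ⟨c_{n-2}†, c_{n-1}†, c_n†, c_{n-2}†c_{n-1}†, c_{n-2}†c_n†, c_{n-1}†c_n†⟩·Λ[c₁†,…,c_{n-3}†] with kernel ⟨1, c_{n-2}†c_{n-1}†c_n†⟩·Λ[c₁†,…,c_{n-3}†]. -/
/-- The subspace of the Fock space consisting of states supported on occupation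
configurations avoiding the "forbidden" configurations. -/
def patternSub (n : ℕ) (allowed : (Fin n → Bool) → Prop) : Submodule ℚ (FockSpace n) where
  carrier := {f | ∀ s, ¬ allowed s → f s = 0}
  add_mem' := by
    intro f g hf hg s hs
    simp [Pi.add_apply, hf s hs, hg s hs]
  zero_mem' := by intro s _; rfl
  smul_mem' := by
    intro a f hf s hs
    simp [Pi.smul_apply, hf s hs]

lemma an_apply {n : ℕ} (i : Fin n) (f : FockSpace n) (s : Fin n → Bool) :
    an i f s = if s i = false then jwSign s i * f (Function.update s i true) else 0 := rfl

lemma cr_apply {n : ℕ} (i : Fin n) (f : FockSpace n) (s : Fin n → Bool) :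
    cr i f s = if s i = true then jwSign s i * f (Function.update s i false) else 0 := rfl

lemma jwSign_eq_or {n : ℕ} (s : Fin n → Bool) (i : Fin n) :
    jwSign s i = 1 ∨ jwSign s i = -1 := by
  unfold jwSign
  rcases Nat.even_or_odd ((Finset.univ.filter (fun j : Fin n => j < i ∧ s j = true)).card) with h | h
  · exact Or.inl h.neg_one_pow
  · exact Or.inr h.neg_one_pow

lemma jwSign_update_ge {n : ℕ} (s : Fin n → Bool) (i j : Fin n) (x : Bool) (h : j ≤ i) :
    jwSign (Function.update s i x) j = jwSign s j := by
  unfold jwSign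
  congr 2
  ext k
  simp only [Finset.mem_filter, Finset.mem_univ, true_and]
  constructor <;> rintro ⟨hk, hv⟩ <;> refine ⟨hk, ?_⟩
  · rwa [Function.update_of_ne (ne_of_lt (lt_of_lt_of_le hk h))] at hv
  · rwa [Function.update_of_ne (ne_of_lt (lt_of_lt_of_le hk h))]

lemma jwSign_update_true {n : ℕ} (s : Fin n → Bool) (i j : Fin n) (h : i < j)
    (hs : s i = false) :
    jwSign (Function.update s i true) j = -jwSign s j := by
  unfold jwSign
  have hset : Finset.univ.filter (fun k : Fin n => k < j ∧ Function.update s i true k = true)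
      = insert i (Finset.univ.filter (fun k : Fin n => k < j ∧ s k = true)) := by
    ext k
    by_cases hk : k = i
    · subst hk; simp [h, hs]
    · simp [Function.update_of_ne hk, hk]
  rw [hset, Finset.card_insert_of_notMem (by simp [hs]), pow_succ]
  ring

lemma jwSign_update_false {n : ℕ} (s : Fin n → Bool) (i j : Fin n) (h : i < j)
    (hs : s i = true) :
    jwSign (Function.update s i false) j = -jwSign s j := by
  unfold jwSign
  have hset : Finset.univ.filter (fun k : Fin n => k < j ∧ s k = true)
      = insert i (Finset.univ.filter (fun k : Fin n => k < j ∧ Function.update s i false k = true)) := by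
    ext k
    by_cases hk : k = i
    · subst hk; simp [h, hs]
    · simp [Function.update_of_ne hk, hk]
  rw [hset, Finset.card_insert_of_notMem (by simp), pow_succ]
  ring

lemma D_eq {n : ℕ} (a b c : Fin n) (hab : a < b) (hac : a < c) (hbc : b < c)
    (g : FockSpace n) (s : Fin n → Bool) :
    (an a ∘ₗ an b ∘ₗ an c) g s =
      if s a = false ∧ s b = false ∧ s c = false then
        jwSign s a * (jwSign (Function.update s a true) b *
          (jwSign (Function.update (Function.update s a true) b true) c *
            g (Function.update (Function.update (Function.update s a true) b true) c true)))
      else 0 := by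
  have hba : b ≠ a := hab.ne'
  have hca : c ≠ a := hac.ne'
  have hcb : c ≠ b := hbc.ne'
  simp only [LinearMap.comp_apply, an_apply, Function.update_of_ne hba,
    Function.update_of_ne hca, Function.update_of_ne hcb]
  by_cases h1 : s a = false
  · by_cases h2 : s b = false
    · by_cases h3 : s c = false
      · simp [h1, h2, h3]
      · simp [h1, h2, h3]
    · simp [h1, h2]
  · simp [h1]

lemma C_eq {n : ℕ} (a b c : Fin n) (hab : a < b) (hac : a < c) (hbc : b < c)
    (g : FockSpace n) (s : Fin n → Bool) :
    (cr a ∘ₗ cr b ∘ₗ cr c) g s =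
      if s a = true ∧ s b = true ∧ s c = true then
        jwSign s a * (jwSign (Function.update s a false) b *
          (jwSign (Function.update (Function.update s a false) b false) c *
            g (Function.update (Function.update (Function.update s a false) b false) c false)))
      else 0 := by
  have hba : b ≠ a := hab.ne'
  have hca : c ≠ a := hac.ne'
  have hcb : c ≠ b := hbc.ne'
  simp only [LinearMap.comp_apply, cr_apply, Function.update_of_ne hba,
    Function.update_of_ne hca, Function.update_of_ne hcb]
  by_cases h1 : s a = true
  · by_cases h2 : s b = true
    · by_cases h3 : s c = true
      · simp [h1, h2, h3]
      · simp [h1, h2, h3]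
    · simp [h1, h2]
  · simp [h1]
lemma DH {n : ℕ} (a b c : Fin n) (hab : a < b) (hac : a < c) (hbc : b < c)
    (f : FockSpace n) (s : Fin n → Bool)
    (ha : s a = false) (hb : s b = false) (hc : s c = false) :
    (an a ∘ₗ an b ∘ₗ an c) ((cr a ∘ₗ cr b ∘ₗ cr c) f) s = -f s := by
  rw [D_eq a b c hab hac hbc, if_pos ⟨ha, hb, hc⟩]
  set t1 := Function.update s a true with ht1
  set t2 := Function.update t1 b true with ht2
  set t3 := Function.update t2 c true with ht3
  have e1b : t1 b = false := by rw [ht1, Function.update_of_ne hab.ne']; exact hb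
  have e3a : t3 a = true := by
    rw [ht3, Function.update_of_ne hac.ne, ht2, Function.update_of_ne hab.ne, ht1,
      Function.update_self]
  have e3b : t3 b = true := by
    rw [ht3, Function.update_of_ne hbc.ne, ht2, Function.update_self]
  have e3c : t3 c = true := by rw [ht3, Function.update_self]
  rw [C_eq a b c hab hac hbc, if_pos ⟨e3a, e3b, e3c⟩]
  have e4b : (Function.update t3 a false) b = true := by
    rw [Function.update_of_ne hab.ne']; exact e3b
  have A1 : jwSign t1 b = -jwSign s b := by
    rw [ht1, jwSign_update_true s a b hab ha]
  have A2 : jwSign t2 c = jwSign s c := by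
    rw [ht2, jwSign_update_true t1 b c hbc e1b, ht1, jwSign_update_true s a c hac ha]; ring
  have A3 : jwSign t3 a = jwSign s a := by
    rw [ht3, jwSign_update_ge t2 c a true hac.le, ht2, jwSign_update_ge t1 b a true hab.le,
      ht1, jwSign_update_ge s a a true le_rfl]
  have A4 : jwSign (Function.update t3 a false) b = jwSign s b := by
    rw [jwSign_update_false t3 a b hab e3a, ht3, jwSign_update_ge t2 c b true hbc.le, ht2,
      jwSign_update_ge t1 b b true le_rfl, ht1, jwSign_update_true s a b hab ha]; ring
  have A5 : jwSign (Function.update (Function.update t3 a false) b false) c = jwSign s c := by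
    rw [jwSign_update_false _ b c hbc e4b, jwSign_update_false t3 a c hac e3a, ht3,
      jwSign_update_ge t2 c c true le_rfl, A2]; ring
  have e6 : Function.update (Function.update (Function.update t3 a false) b false) c false
      = s := by
    funext k
    simp only [ht3, ht2, ht1, Function.update_apply]
    rcases eq_or_ne k c with rfl | h1 <;> rcases eq_or_ne k b with rfl | h2 <;>
      rcases eq_or_ne k a with rfl | h3 <;> simp_all
  rw [A1, A2, A3, A4, A5, e6]
  rcases jwSign_eq_or s a with hA | hA <;> rcases jwSign_eq_or s b with hB | hB <;>
    rcases jwSign_eq_or s c with hC | hC <;> rw [hA, hB, hC] <;> ring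

lemma HD {n : ℕ} (a b c : Fin n) (hab : a < b) (hac : a < c) (hbc : b < c)
    (f : FockSpace n) (s : Fin n → Bool)
    (ha : s a = true) (hb : s b = true) (hc : s c = true) :
    (cr a ∘ₗ cr b ∘ₗ cr c) ((an a ∘ₗ an b ∘ₗ an c) f) s = -f s := by
  rw [C_eq a b c hab hac hbc, if_pos ⟨ha, hb, hc⟩]
  set t1 := Function.update s a false with ht1
  set t2 := Function.update t1 b false with ht2
  set t3 := Function.update t2 c false with ht3
  have e1b : t1 b = true := by rw [ht1, Function.update_of_ne hab.ne']; exact hb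
  have e3a : t3 a = false := by
    rw [ht3, Function.update_of_ne hac.ne, ht2, Function.update_of_ne hab.ne, ht1,
      Function.update_self]
  have e3b : t3 b = false := by
    rw [ht3, Function.update_of_ne hbc.ne, ht2, Function.update_self]
  have e3c : t3 c = false := by rw [ht3, Function.update_self]
  rw [D_eq a b c hab hac hbc, if_pos ⟨e3a, e3b, e3c⟩]
  have e4b : (Function.update t3 a true) b = false := by
    rw [Function.update_of_ne hab.ne']; exact e3b
  have A1 : jwSign t1 b = -jwSign s b := by
    rw [ht1, jwSign_update_false s a b hab ha]
  have A2 : jwSign t2 c = jwSign s c := by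
    rw [ht2, jwSign_update_false t1 b c hbc e1b, ht1, jwSign_update_false s a c hac ha]; ring
  have A3 : jwSign t3 a = jwSign s a := by
    rw [ht3, jwSign_update_ge t2 c a false hac.le, ht2, jwSign_update_ge t1 b a false hab.le,
      ht1, jwSign_update_ge s a a false le_rfl]
  have A4 : jwSign (Function.update t3 a true) b = jwSign s b := by
    rw [jwSign_update_true t3 a b hab e3a, ht3, jwSign_update_ge t2 c b false hbc.le, ht2,
      jwSign_update_ge t1 b b false le_rfl, ht1, jwSign_update_false s a b hab ha]; ring
  have A5 : jwSign (Function.update (Function.update t3 a true) b true) c = jwSign s c := by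
    rw [jwSign_update_true _ b c hbc e4b, jwSign_update_true t3 a c hac e3a, ht3,
      jwSign_update_ge t2 c c false le_rfl, A2]; ring
  have e6 : Function.update (Function.update (Function.update t3 a true) b true) c true
      = s := by
    funext k
    simp only [ht3, ht2, ht1, Function.update_apply]
    rcases eq_or_ne k c with rfl | h1 <;> rcases eq_or_ne k b with rfl | h2 <;>
      rcases eq_or_ne k a with rfl | h3 <;> simp_all
  rw [A1, A2, A3, A4, A5, e6]
  rcases jwSign_eq_or s a with hA | hA <;> rcases jwSign_eq_or s b with hB | hB <;>
    rcases jwSign_eq_or s c with hC | hC <;> rw [hA, hB, hC] <;> ring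
lemma keyMain {n : ℕ} (a b c : Fin n) (hab : a < b) (hac : a < c) (hbc : b < c)
    (bad : (Fin n → Bool) → Prop)
    (hbad : ∀ s, bad s ↔ ((s a = false ∧ s b = false ∧ s c = false) ∨
      (s a = true ∧ s b = true ∧ s c = true)))
    (P : FockSpace n →ₗ[ℚ] FockSpace n)
    (hP : P = LinearMap.id + (an a ∘ₗ an b ∘ₗ an c) ∘ₗ (cr a ∘ₗ cr b ∘ₗ cr c)
      + (cr a ∘ₗ cr b ∘ₗ cr c) ∘ₗ (an a ∘ₗ an b ∘ₗ an c)) :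
    IsCompl (patternSub n (fun s => ¬ bad s)) (patternSub n bad) ∧
      (∀ f ∈ patternSub n (fun s => ¬ bad s), P f = f) ∧
      (∀ f ∈ patternSub n bad, P f = 0) := by
  classical
  have hPapp : ∀ (f : FockSpace n) (s : Fin n → Bool),
      P f s = f s + (an a ∘ₗ an b ∘ₗ an c) ((cr a ∘ₗ cr b ∘ₗ cr c) f) s
        + (cr a ∘ₗ cr b ∘ₗ cr c) ((an a ∘ₗ an b ∘ₗ an c) f) s := by
    intro f s
    rw [hP]
    simp only [LinearMap.add_apply, LinearMap.id_apply, LinearMap.comp_apply, Pi.add_apply]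
  have keyBad : ∀ (f : FockSpace n) (s : Fin n → Bool), bad s → P f s = 0 := by
    intro f s hs
    rw [hPapp]
    rcases (hbad s).mp hs with ⟨ha', hb', hc'⟩ | ⟨ha', hb', hc'⟩
    · rw [DH a b c hab hac hbc f s ha' hb' hc',
        C_eq a b c hab hac hbc _ s, if_neg (by simp [ha'])]
      ring
    · rw [HD a b c hab hac hbc f s ha' hb' hc',
        D_eq a b c hab hac hbc _ s, if_neg (by simp [ha'])]
      ring
  have keyGood : ∀ (f : FockSpace n) (s : Fin n → Bool), ¬ bad s → P f s = f s := by
    intro f s hs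
    have hs' : ¬ ((s a = false ∧ s b = false ∧ s c = false) ∨
        (s a = true ∧ s b = true ∧ s c = true)) := fun hAB => hs ((hbad s).mpr hAB)
    obtain ⟨h1, h2⟩ := not_or.mp hs'
    rw [hPapp, D_eq a b c hab hac hbc _ s, if_neg h1, C_eq a b c hab hac hbc _ s, if_neg h2]
    ring
  have memS : ∀ f : FockSpace n, f ∈ patternSub n (fun s => ¬ bad s) ↔
      ∀ s, bad s → f s = 0 := by
    intro f
    constructor
    · intro hf s hs; exact hf s (not_not_intro hs)
    · intro hf s hs; exact hf s (not_not.mp hs)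
  have memT : ∀ f : FockSpace n, f ∈ patternSub n bad ↔ ∀ s, ¬ bad s → f s = 0 :=
    fun f => Iff.rfl
  refine ⟨⟨?_, ?_⟩, ?_, ?_⟩
  · rw [Submodule.disjoint_def]
    intro f hfS hfT
    funext s
    show f s = 0
    by_cases hs : bad s
    · exact (memS f).mp hfS s hs
    · exact (memT f).mp hfT s hs
  · rw [codisjoint_iff, eq_top_iff]
    intro f _
    have hg : (fun s => if bad s then 0 else f s) ∈ patternSub n (fun s => ¬ bad s) := by
      rw [memS]; intro s hs; simp [hs]
    have hh : (fun s => if bad s then f s else 0) ∈ patternSub n bad := by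
      rw [memT]; intro s hs; simp [hs]
    have hsum : f = (fun s => if bad s then 0 else f s)
        + (fun s => if bad s then f s else 0) := by
      funext s
      by_cases hs : bad s <;> simp [hs]
    rw [hsum]
    exact Submodule.add_mem_sup hg hh
  · intro f hf
    funext s
    show P f s = f s
    by_cases hs : bad s
    · rw [keyBad f s hs, (memS f).mp hf s hs]
    · exact keyGood f s hs
  · intro f hf
    funext s
    show P f s = 0
    by_cases hs : bad s
    · exact keyBad f s hs
    · rw [keyGood f s hs]; exact (memT f).mp hf s hs
/-- with `h = c_n† c_{n-1}† c_{n-2}†` and `d₁ = c_{n-2} c_{n-1} c_n`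
(0-indexed sites `a = n-3`, `b = n-2`, `c = n-1`), the operator `id + d₁h + hd₁` is the
(here `d₁` is composed right-to-left and `h` in the written order, the Koszul-sign
convention under which the homotopy identity holds)
projection onto
`⟨c_{n-2}†, c_{n-1}†, c_n†, c_{n-2}†c_{n-1}†, c_{n-2}†c_n†, c_{n-1}†c_n†⟩·Λ[c₁†,…,c_{n-3}†]`
(states whose occupation on the last three sites is neither all-empty nor all-full)
with kernel `⟨1, c_{n-2}†c_{n-1}†c_n†⟩·Λ[c₁†,…,c_{n-3}†]`. -/
theorem z2_homotopy_projection (n : ℕ) (hn : 3 ≤ n) :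
    letI a : Fin n := ⟨n-3, by omega⟩
    letI b : Fin n := ⟨n-2, by omega⟩
    letI c : Fin n := ⟨n-1, by omega⟩
    letI h : FockSpace n →ₗ[ℚ] FockSpace n := cr a ∘ₗ cr b ∘ₗ cr c
    letI d1 : FockSpace n →ₗ[ℚ] FockSpace n := an a ∘ₗ an b ∘ₗ an c
    letI P : FockSpace n →ₗ[ℚ] FockSpace n := LinearMap.id + d1 ∘ₗ h + h ∘ₗ d1
    letI bad : (Fin n → Bool) → Prop := fun s =>
      (s a = false ∧ s b = false ∧ s c = false) ∨
      (s a = true ∧ s b = true ∧ s c = true)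
    letI S : Submodule ℚ (FockSpace n) := patternSub n (fun s => ¬ bad s)
    letI T : Submodule ℚ (FockSpace n) := patternSub n bad
    IsCompl S T ∧ (∀ f ∈ S, P f = f) ∧ (∀ f ∈ T, P f = 0) := by
  exact keyMain ⟨n-3, by omega⟩ ⟨n-2, by omega⟩ ⟨n-1, by omega⟩
    (Fin.mk_lt_mk.mpr (by omega)) (Fin.mk_lt_mk.mpr (by omega)) (Fin.mk_lt_mk.mpr (by omega))
    _ (fun s => Iff.rfl) _ rfl
end

section
/- In the exterior algebra Λ[c₁†,…,c₃†] with Q = c₁ c₂† c₃, the homology of Q (i.e., ker Q / im Q) has dimension 6, with graded dimensions given by the Poincaré polynomial 1 + 2z + 2z² + z³. -/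
/-- The fermion-number-`k` graded piece of the Fock space: states supported on
configurations with exactly `k` occupied sites. -/
def degSub (n k : ℕ) : Submodule ℚ (FockSpace n) where
  carrier := {f | ∀ s, (Finset.univ.filter (fun j => s j = true)).card ≠ k → f s = 0}
  add_mem' := by
    intro f g hf hg s hs
    simp [Pi.add_apply, hf s hs, hg s hs]
  zero_mem' := by intro s _; rfl
  smul_mem' := by
    intro a f hf s hs
    simp [Pi.smul_apply, hf s hs]

/-!
`Q` has rank one: it kills seven of the eight occupation basis states and sends the state `101`
(that is, `c₁†c₃†|0⟩`) to `010`, the two Jordan–Wigner signs picked up on the way cancelling.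
So `Q` has degree `-1` and is nonzero only on `Λ₂`, whence
`dim (ker Q ∩ Λᵢ) = C(3, i) - [i = 2]` and `dim Q(Λᵢ₊₁) = [i = 1]`, giving `1, 2, 2, 1`;
in total `dim ker Q - dim im Q = (8 - 1) - 1 = 6`.
-/

open Module Submodule

section RankOne

variable {K V W : Type*} [DivisionRing K] [AddCommGroup V] [Module K V] [AddCommGroup W]
  [Module K W]

theorem LinearMap.finrank_map_add_finrank_ker_inf [FiniteDimensional K V] (f : V →ₗ[K] W)
    (U : Submodule K V) : finrank K (U.map f) + finrank K ↥(LinearMap.ker f ⊓ U) = finrank K U := by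
  have := (f.domRestrict U).finrank_range_add_finrank_ker
  rwa [LinearMap.range_domRestrict, LinearMap.ker_domRestrict, ← finrank_map_subtype_eq,
    map_comap_subtype, inf_comm] at this

open Classical in
theorem LinearMap.finrank_map_smulRight (φ : V →ₗ[K] K) {w : W} (hw : w ≠ 0)
    (U : Submodule K V) :
    finrank K (U.map (φ.smulRight w)) = if ∃ v ∈ U, φ v ≠ 0 then 1 else 0 := by
  split_ifs with h
  · obtain ⟨v, hvU, hv⟩ := h
    suffices U.map (φ.smulRight w) = K ∙ w by rw [this, finrank_span_singleton hw]
    refine le_antisymm ?_ ?_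
    · rintro _ ⟨u, -, rfl⟩
      exact mem_span_singleton.mpr ⟨φ u, rfl⟩
    · rw [span_singleton_le_iff_mem]
      refine ⟨(φ v)⁻¹ • v, U.smul_mem _ hvU, ?_⟩
      simp [smul_smul, inv_mul_cancel₀ hv]
  · push Not at h
    suffices U.map (φ.smulRight w) = ⊥ by rw [this, finrank_bot]
    rw [eq_bot_iff]
    rintro _ ⟨u, hu, rfl⟩
    simp [h u hu]

end RankOne

def occupiedSitesEquiv (α : Type*) [Fintype α] [DecidableEq α] : (α → Bool) ≃ Finset α where
  toFun s := Finset.univ.filter (s · = true)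
  invFun t a := decide (a ∈ t)
  left_inv s := by ext; simp
  right_inv t := by ext; simp

def fermionNumber {n : ℕ} (s : Fin n → Bool) : ℕ :=
  (Finset.univ.filter (fun j => s j = true)).card

theorem card_fermionNumber_eq_choose (n k : ℕ) :
    Fintype.card {s : Fin n → Bool // fermionNumber s = k} = n.choose k := by
  rw [Fintype.card_congr ((occupiedSitesEquiv (Fin n)).subtypeEquiv
      (p := fun s => fermionNumber s = k) (q := fun t => t.card = k) fun _ => Iff.rfl),
    Fintype.card_finset_len, Fintype.card_fin]

theorem mem_degSub_iff {n k : ℕ} {f : FockSpace n} :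
    f ∈ degSub n k ↔ ∀ s, fermionNumber s ≠ k → f s = 0 := Iff.rfl

theorem degSub_eq_iInf_ker_proj (n k : ℕ) :
    degSub n k = ⨅ s ∈ {s | fermionNumber s ≠ k}, LinearMap.ker (LinearMap.proj s) := by
  ext f
  simp [mem_degSub_iff]

theorem finrank_degSub (n k : ℕ) : finrank ℚ (degSub n k) = n.choose k := by
  classical
  rw [degSub_eq_iInf_ker_proj, ← card_fermionNumber_eq_choose,
    (LinearMap.iInfKerProjEquiv ℚ (fun _ => ℚ) (I := {s | fermionNumber s = k})
      (J := {s | fermionNumber s ≠ k}) (Set.disjoint_left.mpr fun _ h h' => h' h)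
      (fun s _ => em _)).finrank_eq,
    finrank_fintype_fun_eq_card]
  rfl

theorem exists_mem_degSub_apply_ne_zero_iff {n k : ℕ} (b : Fin n → Bool) :
    (∃ f ∈ degSub n k, f b ≠ 0) ↔ fermionNumber b = k := by
  constructor
  · rintro ⟨f, hf, hfb⟩
    by_contra h
    exact hfb (mem_degSub_iff.mp hf b h)
  · intro h
    refine ⟨Pi.single b 1, mem_degSub_iff.mpr fun s hs => ?_, by simp⟩
    rw [Pi.single_apply, if_neg (by rintro rfl; exact hs h)]

theorem nicolaiQ_eq_smulRight :
    an (0 : Fin 3) ∘ₗ cr 1 ∘ₗ an 2 =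
      (LinearMap.proj ![true, false, true]).smulRight (Pi.single ![false, true, false] (1 : ℚ)) := by
  refine LinearMap.ext fun f => funext fun s => ?_
  obtain ⟨a, b, c, rfl⟩ : ∃ a b c, s = ![a, b, c] :=
    ⟨s 0, s 1, s 2, by ext i; fin_cases i <;> rfl⟩
  cases a <;> cases b <;> cases c <;> simp [an, cr, jwSign, Function.update, Fin.lt_def]
  -- only `s = 010` is left, where the signs of `c₃` and `c₂†` are both `-1`
  rw [show Function.update (Function.update (Function.update ![false, true, false] 0 true) 1 false)
    2 true = ![true, false, true] by decide]
  simp only [Finset.card_filter, Fin.sum_univ_three]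
  simp

open Classical in
theorem finrank_map_nicolaiQ (U : Submodule ℚ (FockSpace 3)) :
    finrank ℚ (U.map (an (0 : Fin 3) ∘ₗ cr 1 ∘ₗ an 2)) =
      if ∃ f ∈ U, f ![true, false, true] ≠ 0 then 1 else 0 := by
  rw [nicolaiQ_eq_smulRight,
    LinearMap.finrank_map_smulRight _ (Pi.single_ne_zero_iff.2 one_ne_zero)]
  rfl

theorem finrank_map_nicolaiQ_degSub (j : ℕ) :
    finrank ℚ ((degSub 3 j).map (an (0 : Fin 3) ∘ₗ cr 1 ∘ₗ an 2)) = if j = 2 then 1 else 0 := by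
  have : fermionNumber ![true, false, true] = 2 := by decide
  simp only [finrank_map_nicolaiQ, exists_mem_degSub_apply_ne_zero_iff, this, eq_comm]

theorem finrank_ker_nicolaiQ_inf_degSub (i : ℕ) :
    finrank ℚ ↥(LinearMap.ker (an (0 : Fin 3) ∘ₗ cr 1 ∘ₗ an 2) ⊓ degSub 3 i) =
      (3 : ℕ).choose i - if i = 2 then 1 else 0 := by
  have := (an (0 : Fin 3) ∘ₗ cr 1 ∘ₗ an 2).finrank_map_add_finrank_ker_inf (degSub 3 i)
  rw [finrank_map_nicolaiQ_degSub, finrank_degSub] at this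
  omega

theorem finrank_range_nicolaiQ :
    finrank ℚ (LinearMap.range (an (0 : Fin 3) ∘ₗ cr 1 ∘ₗ an 2)) = 1 := by
  rw [LinearMap.range_eq_map, finrank_map_nicolaiQ,
    if_pos ⟨Pi.single ![true, false, true] 1, mem_top, by simp⟩]

/-- for `Q = c₁ c₂† c₃` on `Λ[c₁†, c₂†, c₃†]`, the homology
`ker Q / im Q` has total dimension `6`, with graded dimensions
`dim H_i = 1, 2, 2, 1` for `i = 0, 1, 2, 3`, i.e. Poincaré polynomial
`1 + 2z + 2z² + z³`. Here `H_i = (ker Q ∩ Λ_i) / Q(Λ_{i+1})` since `Q` has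
fermion-number degree `-1`. -/
theorem nicolai_three_sites_homology :
    letI Q : FockSpace 3 →ₗ[ℚ] FockSpace 3 :=
      an (0 : Fin 3) ∘ₗ cr (1 : Fin 3) ∘ₗ an (2 : Fin 3)
    Module.finrank ℚ (LinearMap.ker Q) - Module.finrank ℚ (LinearMap.range Q) = 6 ∧
    (∀ i : ℕ,
      Module.finrank ℚ ↥(LinearMap.ker Q ⊓ degSub 3 i) -
        Module.finrank ℚ ↥(Submodule.map Q (degSub 3 (i+1))) =
      if i = 0 then 1 else if i = 1 then 2 else if i = 2 then 2 else
        if i = 3 then 1 else 0) := by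
  refine ⟨?_, fun i => ?_⟩
  · have := (an (0 : Fin 3) ∘ₗ cr 1 ∘ₗ an 2).finrank_range_add_finrank_ker
    rw [finrank_range_nicolaiQ, finrank_fintype_fun_eq_card] at this
    simp only [Fintype.card_fun, Fintype.card_bool, Fintype.card_fin] at this
    rw [finrank_range_nicolaiQ]
    omega
  · rw [finrank_ker_nicolaiQ_inf_degSub, finrank_map_nicolaiQ_degSub]
    rcases i with _ | _ | _ | _ | i <;> simp [Nat.choose_eq_zero_of_lt]
end
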